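/- arXiv:2104.03079 — 2 statements merged into one kernel-verified Lean document; each statement's English description precedes it below -/
import Mathlib

section
/- Let R be a generalized vertical sum of finite posets P and Q (on disjoint carriers X and Y), with a nonempty down-set B⁺ of Q, an up-set B⁻ of P, S⁻ = P restricted to B⁻, S⁺ = Q restricted to B⁺, and a map σ : D(S⁺) → P(B⁻) satisfying σ(T) ⊆ X ∩ ↓_R T ⊆ ↓_P σ(T) for all T ∈ D(S⁺). Assume additionally that Q has a minimum point ⊥ (so ⊥ ∈ B⁺) and that σ is an order isomorphism from D(S⁺) onto D(S⁻). Let P⁺ be the subposet of R induced on X ∪ B⁺. Then h(R) = h(P⁺ ∖ ↓_{P⁺} ⊥) + Σ_{D ∈ D(Q) ∖ D(S⁺)} a_D(R) + Σ_{T ∈ D(S⁻)} ( #{T' ∈ D(S⁻) : T' ⊆ T} ) · a_T(P). -/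
attribute [local instance] Classical.propDecidable

variable {α : Type*} [Fintype α] [PartialOrder α]

/-- The down-sets of the subposet of `α` induced on the carrier `C`. -/
noncomputable def dsOn (C : Finset α) : Finset (Finset α) :=
  Finset.univ.filter fun D => D ⊆ C ∧ ∀ a ∈ C, ∀ b ∈ D, a ≤ b → a ∈ D

/-- `aCoef C Yp T` is the sum, over all down-sets `D` of the subposet induced on `C`
with `D ∩ Yp = T`, of the number of down-sets `E` of that subposet with `E ⊆ D`. -/
noncomputable def aCoef (C Yp T : Finset α) : ℕ :=
  ∑ D ∈ (dsOn C).filter (fun D => D ∩ Yp = T),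
    ((dsOn C).filter fun E => E ⊆ D).card

/-- The down closure `↓_R S` of `S` in the ambient poset. -/
noncomputable def dcl (S : Finset α) : Finset α :=
  Finset.univ.filter fun a => ∃ b ∈ S, a ≤ b

/-- The down closure of `S` within the subposet induced on the carrier `C`. -/
noncomputable def dclOn (C S : Finset α) : Finset α :=
  C.filter fun a => ∃ b ∈ S, b ∈ C ∧ a ≤ b


/-!
A monotone map `f : R → C₃` is the same as a pair `E ⊆ D` of down-sets (`D = f⁻¹{1,2}`,
`E = f⁻¹{1}`), so `h(R)` counts such pairs. Sort them by `T = D ∩ Y ∈ D(Q)`. The pairs with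
`T ∉ D(S⁺)` give the middle sum. If `T ⊆ B⁺`, the pair lives in `P⁺`. If moreover `⊥ ∈ E`, then
`↓⊥ ⊆ E ⊆ D`, and deleting `↓⊥` gives exactly the pairs of down-sets of `P⁺ ∖ ↓⊥`. If `⊥ ∉ E`,
then `E` lies in `X` (every point of `B⁺` is above `⊥`), so `E ∈ D(P)`. The down-sets `D` of `P⁺`
with `D ∩ X = A` are the sets `A ∪ T` with `T ∈ D(S⁺)` and `σ(T) ⊆ A`; this is what the condition
on `σ` gives. Since `σ` is a bijection onto `D(S⁻)`, there are `#{U ∈ D(S⁻) : U ⊆ A ∩ B⁻}` of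
them, and grouping the `A ∈ D(P)` by `A ∩ B⁻` gives the last sum.
-/

open Finset

lemma card_filter_comp_eq_of_bijOn {β γ : Type*} {f : β → γ} {s : Finset β} {t : Finset γ}
    (hf : Set.BijOn f s t) (p : γ → Prop) [DecidablePred p] :
    #(s.filter fun x => p (f x)) = #(t.filter p) := by
  refine Set.BijOn.finsetCard_eq f ⟨fun x hx => ?_, hf.injOn.mono fun x hx => ?_, fun y hy => ?_⟩
  · simp only [coe_filter, Set.mem_ofPred_eq] at hx ⊢
    exact ⟨hf.mapsTo hx.1, hx.2⟩
  · exact (mem_filter.mp hx).1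
  · simp only [coe_filter, Set.mem_ofPred_eq] at hy
    obtain ⟨x, hx, rfl⟩ := hf.surjOn hy.1
    exact ⟨x, by simpa using ⟨hx, hy.2⟩, rfl⟩

lemma mem_dsOn {C D : Finset α} :
    D ∈ dsOn C ↔ D ⊆ C ∧ ∀ a ∈ C, ∀ b ∈ D, a ≤ b → a ∈ D := by
  simp [dsOn]

lemma mem_dsOn_iff_of_mem_dsOn {C C' D : Finset α} (hC : C ∈ dsOn C') (hD : D ⊆ C) :
    D ∈ dsOn C ↔ D ∈ dsOn C' := by
  obtain ⟨hCC', hCdown⟩ := mem_dsOn.mp hC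
  simp only [mem_dsOn, hD, hD.trans hCC', true_and]
  exact ⟨fun h a ha b hb hab => h a (hCdown a ha b (hD hb) hab) b hb hab,
    fun h a ha b hb hab => h a (hCC' ha) b hb hab⟩

lemma inter_mem_dsOn {B C D : Finset α} (hD : D ∈ dsOn C) (hB : B ⊆ C) : D ∩ B ∈ dsOn B := by
  refine mem_dsOn.mpr ⟨inter_subset_right, fun a ha b hb hab => mem_inter.mpr ⟨?_, ha⟩⟩
  exact (mem_dsOn.mp hD).2 a (hB ha) b (mem_inter.mp hb).1 hab

lemma sdiff_mem_dsOn_sdiff {C D : Finset α} (hD : D ∈ dsOn C) (L : Finset α) :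
    D \ L ∈ dsOn (C \ L) := by
  refine mem_dsOn.mpr ⟨sdiff_subset_sdiff (mem_dsOn.mp hD).1 subset_rfl, fun a ha b hb hab => ?_⟩
  rw [mem_sdiff] at ha hb ⊢
  exact ⟨(mem_dsOn.mp hD).2 a ha.1 b hb.1 hab, ha.2⟩

lemma union_mem_dsOn_of_mem_dsOn_sdiff {C D L : Finset α} (hD : D ∈ dsOn (C \ L))
    (hL : L ∈ dsOn C) : D ∪ L ∈ dsOn C := by
  obtain ⟨hDC, hDdown⟩ := mem_dsOn.mp hD
  obtain ⟨hLC, hLdown⟩ := mem_dsOn.mp hL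
  refine mem_dsOn.mpr ⟨union_subset (hDC.trans sdiff_subset) hLC, fun a ha b hb hab => ?_⟩
  by_cases haL : a ∈ L
  · exact mem_union_right _ haL
  rcases mem_union.mp hb with hb | hb
  · exact mem_union_left _ (hDdown a (mem_sdiff.mpr ⟨ha, haL⟩) b hb hab)
  · exact absurd (hLdown a ha b hb hab) haL

lemma dclOn_singleton_mem_dsOn (C : Finset α) (b : α) : dclOn C {b} ∈ dsOn C := by
  refine mem_dsOn.mpr ⟨filter_subset _ _, fun a ha c hc hac => ?_⟩
  simp only [dclOn, mem_filter, mem_singleton, exists_eq_left] at hc ⊢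
  exact ⟨ha, hc.2.1, hac.trans hc.2.2⟩

lemma dclOn_singleton_subset_iff {C E : Finset α} {b : α} (hE : E ∈ dsOn C) (hb : b ∈ C) :
    dclOn C {b} ⊆ E ↔ b ∈ E := by
  refine ⟨fun h => h ?_, fun h a ha => ?_⟩
  · simp [dclOn, hb]
  · simp only [dclOn, mem_filter, mem_singleton, exists_eq_left] at ha
    exact (mem_dsOn.mp hE).2 a ha.1 b h ha.2.2

noncomputable def pairsOn (C : Finset α) : Finset (Finset α × Finset α) :=
  (dsOn C ×ˢ dsOn C).filter fun p => p.2 ⊆ p.1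

lemma mem_pairsOn {C : Finset α} {p : Finset α × Finset α} :
    p ∈ pairsOn C ↔ p.1 ∈ dsOn C ∧ p.2 ∈ dsOn C ∧ p.2 ⊆ p.1 := by
  simp [pairsOn, and_assoc]

lemma card_filter_pairsOn (C : Finset α) (q : Finset α → Prop) [DecidablePred q] :
    #((pairsOn C).filter fun p => q p.2)
      = ∑ D ∈ dsOn C, #((dsOn C).filter fun E => E ⊆ D ∧ q E) := by
  simp only [pairsOn, filter_filter, card_filter, sum_product]

lemma card_pairsOn (C : Finset α) :
    #(pairsOn C) = ∑ D ∈ dsOn C, #((dsOn C).filter fun E => E ⊆ D) := by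
  simpa using card_filter_pairsOn C fun _ => True

lemma sum_mul_card_eq_sum_mul_aCoef {C Yp : Finset α} {s : Finset (Finset α)}
    (h : ∀ D ∈ dsOn C, D ∩ Yp ∈ s) (f : Finset α → ℕ) :
    ∑ D ∈ dsOn C, f (D ∩ Yp) * #((dsOn C).filter fun E => E ⊆ D)
      = ∑ T ∈ s, f T * aCoef C Yp T := by
  rw [← sum_fiberwise_of_maps_to h]
  refine sum_congr rfl fun T _ => ?_
  rw [aCoef, mul_sum]
  exact sum_congr rfl fun D hD => by rw [(mem_filter.mp hD).2]

lemma card_pairsOn_eq_sum_aCoef {C Yp : Finset α} {s : Finset (Finset α)}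
    (h : ∀ D ∈ dsOn C, D ∩ Yp ∈ s) : #(pairsOn C) = ∑ T ∈ s, aCoef C Yp T := by
  have h1 := sum_mul_card_eq_sum_mul_aCoef h 1
  simp only [Pi.one_apply, one_mul] at h1
  rw [card_pairsOn, h1]

lemma aCoef_eq_of_mem_dsOn {C C' Yp T : Finset α} (hC : C ∈ dsOn C')
    (hT : ∀ D ∈ dsOn C', D ∩ Yp = T → D ⊆ C) : aCoef C' Yp T = aCoef C Yp T := by
  have hfib : (dsOn C').filter (fun D => D ∩ Yp = T) = (dsOn C).filter fun D => D ∩ Yp = T := by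
    ext D
    simp only [mem_filter]
    refine ⟨fun ⟨hD, hDT⟩ => ⟨(mem_dsOn_iff_of_mem_dsOn hC (hT D hD hDT)).mpr hD, hDT⟩,
      fun ⟨hD, hDT⟩ => ⟨(mem_dsOn_iff_of_mem_dsOn hC (mem_dsOn.mp hD).1).mp hD, hDT⟩⟩
  rw [aCoef, aCoef, hfib]
  refine sum_congr rfl fun D hD => congrArg card ?_
  have hDC := (mem_dsOn.mp (mem_filter.mp hD).1).1
  ext E
  simp only [mem_filter]
  exact and_congr_left fun hED => (mem_dsOn_iff_of_mem_dsOn hC (hED.trans hDC)).symm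

lemma card_filter_superset_pairsOn {C L : Finset α} (hL : L ∈ dsOn C) :
    #((pairsOn C).filter fun p => L ⊆ p.2) = #(pairsOn (C \ L)) := by
  have hcancel : ∀ D ∈ dsOn (C \ L), (D ∪ L) \ L = D := fun D hD =>
    union_sdiff_cancel_right (disjoint_of_subset_left (mem_dsOn.mp hD).1 sdiff_disjoint)
  refine card_nbij' (fun p => (p.1 \ L, p.2 \ L)) (fun q => (q.1 ∪ L, q.2 ∪ L)) ?_ ?_ ?_ ?_
  · intro p hp
    simp only [coe_filter, Set.mem_ofPred_eq, mem_pairsOn, mem_coe] at hp ⊢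
    exact ⟨sdiff_mem_dsOn_sdiff hp.1.1 L, sdiff_mem_dsOn_sdiff hp.1.2.1 L,
      sdiff_subset_sdiff hp.1.2.2 subset_rfl⟩
  · intro q hq
    simp only [coe_filter, Set.mem_ofPred_eq, mem_pairsOn, mem_coe] at hq ⊢
    exact ⟨⟨union_mem_dsOn_of_mem_dsOn_sdiff hq.1 hL, union_mem_dsOn_of_mem_dsOn_sdiff hq.2.1 hL,
      union_subset_union hq.2.2 subset_rfl⟩, subset_union_right⟩
  · intro p hp
    simp only [coe_filter, Set.mem_ofPred_eq, mem_pairsOn] at hp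
    exact Prod.ext (sdiff_union_of_subset (hp.2.trans hp.1.2.2)) (sdiff_union_of_subset hp.2)
  · intro q hq
    simp only [mem_coe, mem_pairsOn] at hq
    exact Prod.ext (hcancel _ hq.1) (hcancel _ hq.2.1)

lemma card_filter_mem_pairsOn {C : Finset α} {b : α} (hb : b ∈ C) :
    #((pairsOn C).filter fun p => b ∈ p.2) = #(pairsOn (C \ dclOn C {b})) := by
  rw [← card_filter_superset_pairsOn (dclOn_singleton_mem_dsOn C b)]
  exact congrArg card (filter_congr fun p hp =>
    (dclOn_singleton_subset_iff (mem_pairsOn.mp hp).2.1 hb).symm)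

lemma card_orderHom_fin_three : Nat.card (α →o Fin 3) = #(pairsOn (univ : Finset α)) := by
  have hmem : ∀ f : α →o Fin 3,
      ((univ.filter fun x => f x ≤ 1), (univ.filter fun x => f x ≤ 0)) ∈ pairsOn univ := by
    intro f
    simp only [mem_pairsOn, mem_dsOn, subset_univ, mem_univ, mem_filter, true_and, forall_const]
    refine ⟨fun a b hb hab => (f.monotone hab).trans hb,
      fun a b hb hab => (f.monotone hab).trans hb, fun x hx => ?_⟩
    simp only [mem_filter, mem_univ, true_and] at hx ⊢
    exact hx.trans zero_le_one
  rw [← Nat.card_eq_finsetCard]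
  refine Nat.card_eq_of_bijective (fun f => ⟨_, hmem f⟩) ⟨fun f g hfg => ?_, ?_⟩
  · have hlevels : ∀ a b : Fin 3, (a ≤ 1 ↔ b ≤ 1) → (a ≤ 0 ↔ b ≤ 0) → a = b := by decide
    simp only [Subtype.mk.injEq, Prod.mk.injEq, Finset.ext_iff, mem_filter, mem_univ,
      true_and] at hfg
    exact DFunLike.ext f g fun x => hlevels _ _ (hfg.1 x) (hfg.2 x)
  · rintro ⟨⟨D, E⟩, hp⟩
    obtain ⟨hD, hE, hED⟩ := mem_pairsOn.mp hp
    let f : α →o Fin 3 := ⟨fun x => if x ∈ E then 0 else if x ∈ D then 1 else 2, fun a b hab => by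
      have hDa := (mem_dsOn.mp hD).2 a (mem_univ a) b
      have hEa := (mem_dsOn.mp hE).2 a (mem_univ a) b
      dsimp only
      split_ifs <;> simp_all⟩
    have hf : ∀ x, f x = if x ∈ E then 0 else if x ∈ D then 1 else 2 := fun _ => rfl
    refine ⟨f, ?_⟩
    ext x
    all_goals
      by_cases hxE : x ∈ E
      · simp [hf, hxE, hED hxE]
      · by_cases hxD : x ∈ D <;> simp [hf, hxE, hxD]

lemma map_subtype_mem_dsOn_iff {C : Finset α} (D : Finset {x // x ∈ C}) :
    D.map (Function.Embedding.subtype _) ∈ dsOn C ↔ D ∈ dsOn univ := by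
  simp only [mem_dsOn, subset_univ, mem_univ, true_and, forall_const]
  constructor
  · rintro ⟨-, h⟩ a b hb hab
    exact (mem_map' _).mp (h a a.2 b (mem_map_of_mem _ hb) hab)
  · refine fun h => ⟨fun x hx => ?_, fun a ha b hb hab => ?_⟩
    · obtain ⟨y, -, rfl⟩ := mem_map.mp hx
      exact y.2
    · obtain ⟨b', hb', rfl⟩ := mem_map.mp hb
      exact mem_map_of_mem _ (h ⟨a, ha⟩ b' hb' hab)

lemma card_pairsOn_univ_subtype (C : Finset α) :
    #(pairsOn (univ : Finset {x // x ∈ C})) = #(pairsOn C) := by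
  have hmap : ∀ {D}, D ∈ dsOn C → (D.subtype (· ∈ C)).map (Function.Embedding.subtype _) = D :=
    fun hD => subtype_map_of_mem (mem_dsOn.mp hD).1
  refine card_bij (fun p _ => (p.1.map (Function.Embedding.subtype _), p.2.map
    (Function.Embedding.subtype _))) (fun p hp => ?_) (fun p _ q _ h => ?_) (fun q hq => ?_)
  · obtain ⟨h1, h2, h21⟩ := mem_pairsOn.mp hp
    exact mem_pairsOn.mpr ⟨(map_subtype_mem_dsOn_iff _).mpr h1, (map_subtype_mem_dsOn_iff _).mpr h2,
      map_subset_map.mpr h21⟩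
  · simp only [Prod.mk.injEq, map_inj] at h
    exact Prod.ext h.1 h.2
  · obtain ⟨h1, h2, h21⟩ := mem_pairsOn.mp hq
    refine ⟨(q.1.subtype (· ∈ C), q.2.subtype (· ∈ C)), ?_, Prod.ext (hmap h1) (hmap h2)⟩
    rw [mem_pairsOn, ← map_subtype_mem_dsOn_iff, ← map_subtype_mem_dsOn_iff, hmap h1, hmap h2]
    exact ⟨h1, h2, subtype_mono h21⟩

lemma card_orderHom_subtype_fin_three (C : Finset α) :
    Nat.card ({x // x ∈ C} →o Fin 3) = #(pairsOn C) := by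
  rw [card_orderHom_fin_three, card_pairsOn_univ_subtype]

lemma mem_dsOn_union_and_notMem_iff {X B E : Finset α} {b : α} (hX : X ∈ dsOn (X ∪ B))
    (hbX : b ∉ X) (hb : b ∈ B) (hbB : ∀ y ∈ B, b ≤ y) :
    E ∈ dsOn (X ∪ B) ∧ b ∉ E ↔ E ∈ dsOn X := by
  constructor
  · rintro ⟨hE, hbE⟩
    have hEX : E ⊆ X := fun x hx => by
      by_contra hxX
      have hxB : x ∈ B := (mem_union.mp ((mem_dsOn.mp hE).1 hx)).resolve_left hxX
      exact hbE ((mem_dsOn.mp hE).2 b (mem_union_right _ hb) x hx (hbB x hxB))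
    exact (mem_dsOn_iff_of_mem_dsOn hX hEX).mpr hE
  · intro hE
    have hEX := (mem_dsOn.mp hE).1
    exact ⟨(mem_dsOn_iff_of_mem_dsOn hX hEX).mp hE, fun h => hbX (hEX h)⟩

lemma card_filter_notMem_pairsOn_union {X B : Finset α} {b : α} (hX : X ∈ dsOn (X ∪ B))
    (hbX : b ∉ X) (hb : b ∈ B) (hbB : ∀ y ∈ B, b ≤ y) :
    #((pairsOn (X ∪ B)).filter fun p => b ∉ p.2)
      = ∑ A ∈ dsOn X, #((dsOn (X ∪ B)).filter fun D => D ∩ X = A)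
          * #((dsOn X).filter fun E => E ⊆ A) := by
  rw [card_filter_pairsOn (X ∪ B) (b ∉ ·),
    ← sum_fiberwise_of_maps_to fun D hD => inter_mem_dsOn hD subset_union_left]
  refine sum_congr rfl fun A _ => ?_
  rw [← smul_eq_mul, ← sum_const]
  refine sum_congr rfl fun D hD => congrArg card ?_
  obtain ⟨-, rfl⟩ := mem_filter.mp hD
  ext E
  have hE := mem_dsOn_union_and_notMem_iff hX hbX hb hbB (E := E)
  have hEX : E ∈ dsOn X → E ⊆ X := fun h => (mem_dsOn.mp h).1
  simp only [mem_filter, subset_inter_iff]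
  tauto

lemma union_mem_dsOn_union {X B A T S : Finset α} (hX : X ∈ dsOn (X ∪ B)) (hA : A ∈ dsOn X)
    (hT : T ∈ dsOn B) (hTS : X ∩ dcl T ⊆ dclOn X S) (hSA : S ⊆ A) : A ∪ T ∈ dsOn (X ∪ B) := by
  obtain ⟨hAX, hAdown⟩ := mem_dsOn.mp hA
  obtain ⟨hTB, hTdown⟩ := mem_dsOn.mp hT
  refine mem_dsOn.mpr ⟨union_subset_union hAX hTB, fun a ha c hc hac => ?_⟩
  rcases mem_union.mp hc with hc | hc
  · exact mem_union_left _ (hAdown a ((mem_dsOn.mp hX).2 a ha c (hAX hc) hac) c hc hac)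
  by_cases haX : a ∈ X
  · have haS : a ∈ dclOn X S := hTS (mem_inter.mpr ⟨haX, by simpa [dcl] using ⟨c, hc, hac⟩⟩)
    obtain ⟨-, s, hs, -, has⟩ := mem_filter.mp haS
    exact mem_union_left _ (hAdown a haX s (hSA hs) has)
  · exact mem_union_right _ (hTdown a ((mem_union.mp ha).resolve_left haX) c hc hac)

lemma card_filter_inter_eq_card_filter_subset {X B A : Finset α} {σ : Finset α → Finset α}
    (hXB : Disjoint X B) (hX : X ∈ dsOn (X ∪ B))
    (hσ : ∀ T ∈ dsOn B, σ T ⊆ X ∩ dcl T ∧ X ∩ dcl T ⊆ dclOn X (σ T)) (hA : A ∈ dsOn X) :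
    #((dsOn (X ∪ B)).filter fun D => D ∩ X = A) = #((dsOn B).filter fun T => σ T ⊆ A) := by
  have hAX := (mem_dsOn.mp hA).1
  refine card_nbij' (· ∩ B) (A ∪ ·) (fun D hD => ?_) (fun T hT => ?_) (fun D hD => ?_)
    (fun T hT => ?_)
  · simp only [coe_filter, Set.mem_ofPred_eq] at hD ⊢
    obtain ⟨hD, rfl⟩ := hD
    refine ⟨inter_mem_dsOn hD subset_union_right, fun s hs => ?_⟩
    obtain ⟨hsX, hsT⟩ := mem_inter.mp ((hσ _ (inter_mem_dsOn hD subset_union_right)).1 hs)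
    obtain ⟨c, hc, hsc⟩ : ∃ c ∈ D ∩ B, s ≤ c := by simpa [dcl] using hsT
    exact mem_inter.mpr ⟨(mem_dsOn.mp hD).2 s (mem_union_left _ hsX) c (mem_inter.mp hc).1 hsc, hsX⟩
  · simp only [coe_filter, Set.mem_ofPred_eq] at hT ⊢
    refine ⟨union_mem_dsOn_union hX hA hT.1 (hσ T hT.1).2 hT.2, ?_⟩
    rw [union_inter_distrib_right, inter_eq_left.mpr hAX,
      disjoint_iff_inter_eq_empty.mp (hXB.symm.mono_left (mem_dsOn.mp hT.1).1), union_empty]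
  · obtain ⟨hDC, rfl⟩ := mem_filter.mp hD
    dsimp only
    rw [← inter_union_distrib_left, inter_eq_left.mpr (mem_dsOn.mp hDC).1]
  · dsimp only
    rw [union_inter_distrib_right, disjoint_iff_inter_eq_empty.mp (hXB.mono_left hAX),
      empty_union, inter_eq_left.mpr (mem_dsOn.mp (mem_filter.mp hT).1).1]

lemma sum_card_fiber_mul_eq_sum_mul_aCoef {X B Bm : Finset α} {σ : Finset α → Finset α}
    (hXB : Disjoint X B) (hX : X ∈ dsOn (X ∪ B)) (hBm : Bm ⊆ X)
    (hσ : ∀ T ∈ dsOn B, σ T ⊆ X ∩ dcl T ∧ X ∩ dcl T ⊆ dclOn X (σ T))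
    (hσbij : Set.BijOn σ (dsOn B) (dsOn Bm)) :
    ∑ A ∈ dsOn X, #((dsOn (X ∪ B)).filter fun D => D ∩ X = A)
        * #((dsOn X).filter fun E => E ⊆ A)
      = ∑ T ∈ dsOn Bm, #((dsOn Bm).filter fun T' => T' ⊆ T) * aCoef X Bm T := by
  rw [← sum_mul_card_eq_sum_mul_aCoef fun A hA => inter_mem_dsOn hA hBm]
  refine sum_congr rfl fun A hA => ?_
  rw [card_filter_inter_eq_card_filter_subset hXB hX hσ hA,
    card_filter_comp_eq_of_bijOn hσbij (· ⊆ A)]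
  congr 2
  exact filter_congr fun U hU => by simp [subset_inter_iff, (mem_dsOn.mp hU).1]

lemma sum_aCoef_dsOn_eq_card_pairsOn {X Y B : Finset α} (hXY : Disjoint X Y)
    (hcover : X ∪ Y = univ) (hXB : X ∪ B ∈ dsOn univ) (hB : B ∈ dsOn Y) :
    ∑ T ∈ dsOn B, aCoef univ Y T = #(pairsOn (X ∪ B)) := by
  have hmaps : ∀ D ∈ dsOn (X ∪ B), D ∩ Y ∈ dsOn B := fun D hD => by
    have hDB : D ∩ Y ⊆ B := fun x hx =>
      (mem_union.mp ((mem_dsOn.mp hD).1 (mem_inter.mp hx).1)).resolve_left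
        (disjoint_right.mp hXY (mem_inter.mp hx).2)
    have hD' := (mem_dsOn_iff_of_mem_dsOn hXB (mem_dsOn.mp hD).1).mp hD
    exact (mem_dsOn_iff_of_mem_dsOn hB hDB).mpr (inter_mem_dsOn hD' (subset_univ Y))
  rw [card_pairsOn_eq_sum_aCoef hmaps]
  refine sum_congr rfl fun T hT => aCoef_eq_of_mem_dsOn hXB fun D _ hDT x hx => ?_
  by_cases hxX : x ∈ X
  · exact mem_union_left _ hxX
  · have hxY : x ∈ Y := (mem_union.mp (hcover ▸ mem_univ x)).resolve_left hxX
    exact mem_union_right _ ((mem_dsOn.mp hT).1 (hDT ▸ mem_inter.mpr ⟨hx, hxY⟩))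

theorem stmt3_general (X Y Bm Bp : Finset α) (bot : α)
    (hdisj : Disjoint X Y) (hcover : X ∪ Y = Finset.univ)
    (hgvs : ∀ a b : α, a ≤ b →
      (a ∈ X ∧ b ∈ X) ∨ (a ∈ Y ∧ b ∈ Y) ∨ (a ∈ X ∧ b ∈ Y))
    (hBmX : Bm ⊆ X)
    (hBpY : Bp ⊆ Y) (hBpDown : ∀ a ∈ Y, ∀ b ∈ Bp, a ≤ b → a ∈ Bp)
    (hBpne : Bp.Nonempty)
    (hbotY : bot ∈ Y) (hbotmin : ∀ y ∈ Y, bot ≤ y)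
    (σ : Finset α → Finset α)
    (hσ : ∀ T ∈ dsOn Bp, σ T ⊆ Bm ∧ σ T ⊆ X ∩ dcl T ∧ X ∩ dcl T ⊆ dclOn X (σ T))
    (hσbij : Set.BijOn σ ↑(dsOn Bp) ↑(dsOn Bm)) :
    Nat.card (α →o Fin 3)
      = Nat.card ({x : α // x ∈ (X ∪ Bp) \ dclOn (X ∪ Bp) {bot}} →o Fin 3)
        + ∑ D ∈ dsOn Y \ dsOn Bp, aCoef Finset.univ Y D
        + ∑ T ∈ dsOn Bm, ((dsOn Bm).filter fun T' => T' ⊆ T).card * aCoef X Bm T := by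
  have hB : Bp ∈ dsOn Y := mem_dsOn.mpr ⟨hBpY, hBpDown⟩
  have hP : X ∪ Bp ∈ dsOn univ := by
    refine mem_dsOn.mpr ⟨subset_univ _, fun a _ b hb hab => ?_⟩
    rcases hgvs a b hab with ⟨ha, -⟩ | ⟨ha, hbY⟩ | ⟨ha, -⟩
    · exact mem_union_left _ ha
    · exact mem_union_right _ (hBpDown a ha b ((mem_union.mp hb).resolve_left
        (disjoint_right.mp hdisj hbY)) hab)
    · exact mem_union_left _ ha
  have hX : X ∈ dsOn (X ∪ Bp) := by
    refine mem_dsOn.mpr ⟨subset_union_left, fun a _ b hb hab => ?_⟩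
    rcases hgvs a b hab with ⟨ha, -⟩ | ⟨-, hbY⟩ | ⟨ha, -⟩
    · exact ha
    · exact absurd hbY (disjoint_left.mp hdisj hb)
    · exact ha
  have hbot : bot ∈ Bp := by
    obtain ⟨b, hb⟩ := hBpne
    exact hBpDown bot hbotY b hb (hbotmin b (hBpY hb))
  rw [card_orderHom_fin_three, card_orderHom_subtype_fin_three,
    card_pairsOn_eq_sum_aCoef fun D hD => inter_mem_dsOn hD (subset_univ Y),
    ← sum_sdiff fun T hT => (mem_dsOn_iff_of_mem_dsOn hB (mem_dsOn.mp hT).1).mp hT,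
    sum_aCoef_dsOn_eq_card_pairsOn hdisj hcover hP hB,
    ← card_filter_add_card_filter_not (fun p => bot ∈ p.2),
    card_filter_mem_pairsOn (mem_union_right X hbot),
    card_filter_notMem_pairsOn_union hX (disjoint_right.mp hdisj hbotY) hbot
      fun y hy => hbotmin y (hBpY hy),
    sum_card_fiber_mul_eq_sum_mul_aCoef (hdisj.mono_right hBpY) hX hBmX (fun T hT => (hσ T hT).2)
      hσbij]
  ring

/-- Let `R` be a finite poset on `X ∪ Y` (here: the ambient type `α`), `X, Y` disjoint,
which is a generalized vertical sum of `P = R|X` and `Q = R|Y`; let `B⁻` be an up-set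
of `P`, `B⁺` a nonempty down-set of `Q`, `S⁻ = P|B⁻`, `S⁺ = Q|B⁺`, and
`σ : D(S⁺) → P(B⁻)` with `σ(T) ⊆ X ∩ ↓_R T ⊆ ↓_P σ(T)`.  Assume `Q` has a minimum
point `⊥` and `σ` is an order isomorphism from `D(S⁺)` onto `D(S⁻)`.  With
`P⁺ = R|(X ∪ B⁺)`, we have
`h(R) = h(P⁺ ∖ ↓_{P⁺} ⊥) + ∑_{D ∈ D(Q)∖D(S⁺)} a_D(R)`
`+ ∑_{T ∈ D(S⁻)} #{T' ∈ D(S⁻) : T' ⊆ T} · a_T(P)`. -/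
theorem stmt3 (X Y Bm Bp : Finset α) (bot : α)
    (hdisj : Disjoint X Y) (hcover : X ∪ Y = Finset.univ)
    (hgvs : ∀ a b : α, a ≤ b →
      (a ∈ X ∧ b ∈ X) ∨ (a ∈ Y ∧ b ∈ Y) ∨ (a ∈ X ∧ b ∈ Y))
    (hBmX : Bm ⊆ X) (hBmUp : ∀ a ∈ Bm, ∀ b ∈ X, a ≤ b → b ∈ Bm)
    (hBpY : Bp ⊆ Y) (hBpDown : ∀ a ∈ Y, ∀ b ∈ Bp, a ≤ b → a ∈ Bp)
    (hBpne : Bp.Nonempty)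
    (hbotY : bot ∈ Y) (hbotmin : ∀ y ∈ Y, bot ≤ y)
    (σ : Finset α → Finset α)
    (hσ : ∀ T ∈ dsOn Bp, σ T ⊆ Bm ∧ σ T ⊆ X ∩ dcl T ∧ X ∩ dcl T ⊆ dclOn X (σ T))
    (hσmem : ∀ T ∈ dsOn Bp, σ T ∈ dsOn Bm)
    (hσbij : Set.BijOn σ ↑(dsOn Bp) ↑(dsOn Bm))
    (hσiso : ∀ T ∈ dsOn Bp, ∀ T' ∈ dsOn Bp, (T ⊆ T' ↔ σ T ⊆ σ T')) :
    Nat.card (α →o Fin 3)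
      = Nat.card ({x : α // x ∈ (X ∪ Bp) \ dclOn (X ∪ Bp) {bot}} →o Fin 3)
        + ∑ D ∈ dsOn Y \ dsOn Bp, aCoef Finset.univ Y D
        + ∑ T ∈ dsOn Bm, ((dsOn Bm).filter fun T' => T' ⊆ T).card * aCoef X Bm T :=
  stmt3_general X Y Bm Bp bot hdisj hcover hgvs hBmX hBpY hBpDown hBpne hbotY hbotmin σ hσ hσbij
end

section
/- For n ≥ 1, k ≥ 1 and j ∈ {0,...,n}, let a_j(C_n×C_k) be the sum, over all down-sets D of the product poset C_n×C_k with D ∩ (C_n×{k}) = {1,...,j}×{k}, of the number of down-sets E of C_n×C_k with E ⊆ D (for n = 0, C_0×C_k is the empty poset and a_0(C_0×C_k) = 1). Then for all n ≥ 1 and k ≥ 2: a_0(C_n×C_k) = h(C_n×C_{k−1}); a_j(C_n×C_k) = a_{j−1}(C_{n−1}×C_k) + Σ_{i=j}^{n} a_i(C_n×C_{k−1}) for every j ∈ {1,...,n}; and h(C_n×C_k) = h(C_{n−1}×C_k) + Σ_{i=0}^{n} (i+1) · a_i(C_n×C_{k−1}). -/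
attribute [local instance] Classical.propDecidable

/-- The down-sets of the product poset `C_n × C_k` (componentwise order on
`Fin n × Fin k`), as finite sets. -/
noncomputable def dsCC (n k : ℕ) : Finset (Finset (Fin n × Fin k)) :=
  Finset.univ.filter fun D => ∀ a b : Fin n × Fin k, a ≤ b → b ∈ D → a ∈ D

/-- `a_j(C_n×C_k)`: the sum, over all down-sets `D` of `C_n × C_k` with
`D ∩ (C_n×{k}) = {1,…,j}×{k}`, of the number of down-sets `E` of `C_n × C_k`
with `E ⊆ D` (for `n = 0` this gives `a_0(C_0×C_k) = 1`). -/
noncomputable def aCC (n k j : ℕ) : ℕ :=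
  ∑ D ∈ (dsCC n k).filter (fun D =>
      D.filter (fun p => (p.2 : ℕ) = k - 1)
        = Finset.univ.filter fun p : Fin n × Fin k =>
            (p.1 : ℕ) < j ∧ (p.2 : ℕ) = k - 1),
    ((dsCC n k).filter fun E => E ⊆ D).card

/-!
A pair of down-sets `E ⊆ D` of a finite poset `P` is the same thing as a monotone map
`f : P → C₃` (`E = f⁻¹{0}`, `D = f⁻¹{0,1}`), so `a_j(C_n × C_k)` counts the monotone maps
`C_n × C_k → C₃` whose top row is `≤ 1` exactly on its first `j` points, and `h` counts all
of them; grouping by `j` gives `h(C_n × C_k) = ∑ⱼ a_j(C_n × C_k)`.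

If the top row is constantly `2` it can be deleted, which gives
`a_0(C_n × C_k) = h(C_n × C_{k-1})`. For `j ≥ 1`, either the top row starts with `0`, so the
whole first column is `0` and deleting it leaves a map counted by `a_{j-1}(C_{n-1} × C_k)`; or
the top row is `1` on its first `j` points and `2` after them, and deleting it leaves an
arbitrary map whose new top row is `≤ 1` at the `j`-th point, i.e. one counted by
`a_i(C_n × C_{k-1})` for some `i ≥ j`. Summing the second identity over `j` gives the third.
-/

open Finset

noncomputable instance {α β : Type*} [Preorder α] [Preorder β] [Finite α] [Finite β] :
    Fintype (α →o β) :=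
  haveI : Finite (α →o β) := Finite.of_injective _ DFunLike.coe_injective
  Fintype.ofFinite _

theorem Fin.mem_iff_lt_card_of_isLowerSet {n : ℕ} {S : Finset (Fin n)}
    (hS : IsLowerSet (S : Set (Fin n))) (i : Fin n) : i ∈ S ↔ (i : ℕ) < #S := by
  constructor
  · intro hi
    have := card_le_card fun a (ha : a ∈ Iic i) => hS (mem_Iic.mp ha) hi
    rw [Fin.card_Iic] at this
    omega
  · intro hlt
    by_contra hi
    have := card_le_card fun b hb => mem_Iio.mpr (lt_of_not_ge fun hib => hi (hS hib hb))
    rw [Fin.card_Iio] at this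
    omega

theorem Fin.forall_mem_iff_lt_iff_card_eq {n j : ℕ} {S : Finset (Fin n)}
    (hS : IsLowerSet (S : Set (Fin n))) (hj : j ≤ n) :
    (∀ i : Fin n, i ∈ S ↔ (i : ℕ) < j) ↔ #S = j := by
  simp only [Fin.mem_iff_lt_card_of_isLowerSet hS]
  refine ⟨fun h => ?_, fun h i => h ▸ Iff.rfl⟩
  have hS_le : #S ≤ n := card_le_univ S |>.trans (Fintype.card_fin n).le
  by_contra hne
  rcases Nat.lt_or_gt_of_ne hne with hlt | hlt
  · simpa using (h ⟨#S, by omega⟩).mpr hlt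
  · simpa using (h ⟨j, by omega⟩).mp hlt

section LowerFinsets

variable (α : Type*) [Preorder α] [Fintype α]

noncomputable def lowerFinsets : Finset (Finset α) :=
  {D | ∀ a b : α, a ≤ b → b ∈ D → a ∈ D}

variable {α}

theorem mem_lowerFinsets {D : Finset α} :
    D ∈ lowerFinsets α ↔ ∀ a b : α, a ≤ b → b ∈ D → a ∈ D := by
  simp [lowerFinsets]

noncomputable def levelHom {D E : Finset α} (hD : D ∈ lowerFinsets α)
    (hE : E ∈ lowerFinsets α) : α →o Fin 3 where
  toFun x := if x ∈ E then 0 else if x ∈ D then 1 else 2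
  monotone' x y hxy := by
    have hE' := mem_lowerFinsets.mp hE x y hxy
    have hD' := mem_lowerFinsets.mp hD x y hxy
    dsimp only
    split_ifs <;> grind

theorem levelHom_le_one_iff {D E : Finset α} (hD : D ∈ lowerFinsets α)
    (hE : E ∈ lowerFinsets α) (x : α) : levelHom hD hE x ≤ 1 ↔ x ∈ E ∨ x ∈ D := by
  change (if x ∈ E then 0 else if x ∈ D then 1 else 2 : Fin 3) ≤ 1 ↔ _
  split_ifs <;> grind

theorem levelHom_eq_zero_iff {D E : Finset α} (hD : D ∈ lowerFinsets α)
    (hE : E ∈ lowerFinsets α) (x : α) : levelHom hD hE x = 0 ↔ x ∈ E := by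
  change (if x ∈ E then 0 else if x ∈ D then 1 else 2 : Fin 3) = 0 ↔ x ∈ E
  split_ifs <;> simp_all

theorem levelHom_levelSets (f : α →o Fin 3)
    (hD : ({x | f x ≤ 1} : Finset α) ∈ lowerFinsets α)
    (hE : ({x | f x = 0} : Finset α) ∈ lowerFinsets α) : levelHom hD hE = f := by
  ext x
  have h0 := levelHom_eq_zero_iff hD hE x
  have h1 := levelHom_le_one_iff hD hE x
  simp only [mem_filter, mem_univ, true_and] at h0 h1
  omega

theorem sum_card_lowerFinsets_subset_eq_card_orderHom (P : Finset α → Prop) :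
    ∑ D ∈ (lowerFinsets α).filter P, ((lowerFinsets α).filter (· ⊆ D)).card
      = Nat.card {f : α →o Fin 3 // P {x | f x ≤ 1}} := by
  rw [← card_sigma, Nat.card_eq_fintype_card, Fintype.card_subtype]
  refine card_bij' (fun p hp => levelHom (mem_filter.mp (mem_sigma.mp hp).1).1
      (mem_filter.mp (mem_sigma.mp hp).2).1)
    (fun f _ => ⟨({x | f x ≤ 1} : Finset α), ({x | f x = 0} : Finset α)⟩) ?_ ?_ ?_ ?_
  · rintro ⟨D, E⟩ hp
    simp only [mem_sigma, mem_filter] at hp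
    obtain ⟨⟨hD, hP⟩, hE, hED⟩ := hp
    simp only [mem_filter, mem_univ, true_and]
    convert hP using 1
    ext x
    simpa [levelHom_le_one_iff] using fun h => hED h
  · intro f hf
    simp only [mem_filter, mem_univ, true_and] at hf
    simp only [mem_sigma, mem_filter, mem_lowerFinsets, mem_univ, true_and]
    refine ⟨⟨fun a b hab hb => ?_, hf⟩, fun a b hab hb => ?_, fun x hx => ?_⟩
    · exact (f.monotone hab).trans hb
    · exact Fin.le_zero_iff.mp (hb ▸ f.monotone hab)
    · simp only [mem_filter, mem_univ, true_and] at hx ⊢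
      omega
  · rintro ⟨D, E⟩ hp
    simp only [mem_sigma, mem_filter] at hp
    obtain ⟨⟨hD, -⟩, hE, hED⟩ := hp
    ext x
    · simpa [levelHom_le_one_iff] using fun h => hED h
    · simp [levelHom_eq_zero_iff]
  · exact fun f _ => levelHom_levelSets f _ _

end LowerFinsets

theorem dsCC_eq_lowerFinsets (n k : ℕ) : dsCC n k = lowerFinsets (Fin n × Fin k) := by
  unfold dsCC lowerFinsets
  congr

noncomputable def aHom (n k j : ℕ) : ℕ :=
  Nat.card {f : Fin n × Fin (k + 1) →o Fin 3 // ∀ i, f (i, Fin.last k) ≤ 1 ↔ (i : ℕ) < j}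

theorem aCC_succ_eq_aHom (n k j : ℕ) : aCC n (k + 1) j = aHom n k j := by
  rw [aCC, aHom, dsCC_eq_lowerFinsets]
  convert sum_card_lowerFinsets_subset_eq_card_orderHom _ using 4 with f
  have hlast (b : Fin (k + 1)) : (b : ℕ) = k + 1 - 1 ↔ b = Fin.last k := by
    rw [Fin.ext_iff, Fin.val_last, Nat.add_sub_cancel]
  simp only [Finset.ext_iff, mem_filter, mem_univ, true_and, Prod.forall, hlast,
    and_congr_left_iff]
  exact ⟨fun h i b hb => hb ▸ h i, fun h i => h i _ rfl⟩

section TopRow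

variable {n k : ℕ}

noncomputable def topRowLength (f : Fin n × Fin (k + 1) →o Fin 3) : ℕ :=
  #{i | f (i, Fin.last k) ≤ 1}

theorem isLowerSet_topRow (f : Fin n × Fin (k + 1) →o Fin 3) :
    IsLowerSet (({i | f (i, Fin.last k) ≤ 1} : Finset (Fin n)) : Set (Fin n)) := by
  intro a b hba ha
  simp only [coe_filter, mem_univ, true_and, Set.mem_ofPred_eq] at ha ⊢
  exact (f.monotone (Prod.mk_le_mk.mpr ⟨hba, le_rfl⟩)).trans ha

theorem le_one_iff_lt_topRowLength (f : Fin n × Fin (k + 1) →o Fin 3) (i : Fin n) :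
    f (i, Fin.last k) ≤ 1 ↔ (i : ℕ) < topRowLength f := by
  simpa [topRowLength] using Fin.mem_iff_lt_card_of_isLowerSet (isLowerSet_topRow f) i

theorem topRowLength_le (f : Fin n × Fin (k + 1) →o Fin 3) : topRowLength f ≤ n :=
  (card_le_univ _).trans (Fintype.card_fin n).le

theorem forall_le_one_iff_lt_iff_topRowLength_eq (f : Fin n × Fin (k + 1) →o Fin 3) {j : ℕ}
    (hj : j ≤ n) : (∀ i, f (i, Fin.last k) ≤ 1 ↔ (i : ℕ) < j) ↔ topRowLength f = j := by
  simpa [topRowLength] using Fin.forall_mem_iff_lt_iff_card_eq (isLowerSet_topRow f) hj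

theorem sum_aHom_eq_card (s : Finset ℕ) (hs : ∀ j ∈ s, j ≤ n) :
    ∑ j ∈ s, aHom n k j
      = Nat.card {f : Fin n × Fin (k + 1) →o Fin 3 // topRowLength f ∈ s} := by
  rw [Nat.card_eq_fintype_card, Fintype.card_subtype,
    card_eq_sum_card_fiberwise (f := topRowLength) (t := s) fun f hf => by simpa using hf]
  refine sum_congr rfl fun j hj => ?_
  rw [aHom, Nat.card_eq_fintype_card, Fintype.card_subtype, filter_filter]
  congr 1
  refine filter_congr fun f _ => ?_
  rw [forall_le_one_iff_lt_iff_topRowLength_eq f (hs j hj)]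
  exact ⟨fun h => ⟨h ▸ hj, h⟩, And.right⟩

theorem card_orderHom_eq_sum_aHom :
    Nat.card (Fin n × Fin (k + 1) →o Fin 3) = ∑ j ∈ range (n + 1), aHom n k j := by
  rw [sum_aHom_eq_card _ fun j hj => Nat.lt_succ_iff.mp (mem_range.mp hj)]
  exact Nat.card_congr (Equiv.subtypeUnivEquiv fun f =>
    mem_range.mpr (Nat.lt_succ_of_le (topRowLength_le f))).symm

theorem sum_Icc_aHom_eq_card (j : Fin n) :
    ∑ i ∈ Icc (j + 1 : ℕ) n, aHom n k i
      = Nat.card {f : Fin n × Fin (k + 1) →o Fin 3 // f (j, Fin.last k) ≤ 1} := by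
  rw [sum_aHom_eq_card _ fun i hi => (mem_Icc.mp hi).2]
  refine Nat.card_congr (Equiv.subtypeEquivRight fun f => ?_)
  rw [le_one_iff_lt_topRowLength, mem_Icc]
  have := topRowLength_le f
  omega

end TopRow

section Extension

variable {α β : Type*} [Preorder α] [Preorder β]

theorem monotone_snoc_row {k : ℕ} {g : α × Fin k → β} (hg : Monotone g) {t : α → β}
    (ht : Monotone t) (hgt : ∀ p, g p ≤ t p.1) :
    Monotone fun p : α × Fin (k + 1) =>
      (Fin.snoc (fun l => g (p.1, l)) (t p.1) : Fin (k + 1) → β) p.2 := by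
  rintro ⟨a, l⟩ ⟨b, l'⟩ ⟨hab, hl⟩
  dsimp only at hab hl ⊢
  induction l' using Fin.lastCases with
  | last =>
    induction l using Fin.lastCases with
    | last => simpa using ht hab
    | cast l => simpa using (hgt (a, l)).trans (ht hab)
  | cast l' =>
    induction l using Fin.lastCases with
    | last => exact absurd hl (Fin.castSucc_lt_last l').not_ge
    | cast l => simpa using hg (Prod.mk_le_mk.mpr ⟨hab, Fin.castSucc_le_castSucc_iff.mp hl⟩)

def snocRowEquiv (k : ℕ) (t : α →o β) :
    {f : α × Fin (k + 1) →o β // ∀ a, f (a, Fin.last k) = t a}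
      ≃ {g : α × Fin k →o β // ∀ p, g p ≤ t p.1} where
  toFun f := ⟨⟨fun p => f.1 (p.1, p.2.castSucc),
      f.1.monotone.comp (monotone_id.prodMap Fin.strictMono_castSucc.monotone)⟩,
    fun p => f.2 p.1 ▸ f.1.monotone (Prod.mk_le_mk.mpr ⟨le_rfl, Fin.le_last _⟩)⟩
  invFun g := ⟨⟨_, monotone_snoc_row g.1.monotone t.monotone g.2⟩, fun _ => by simp⟩
  left_inv f := by
    ext ⟨a, l⟩
    induction l using Fin.lastCases with
    | last => simp [f.2 a]
    | cast l => simp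
  right_inv g := by
    ext
    simp

variable [OrderBot β]

theorem monotone_cons_column {γ : Type*} [Preorder γ] {n : ℕ} {g : Fin n × γ → β}
    (hg : Monotone g) :
    Monotone fun p : Fin (n + 1) × γ =>
      (Fin.cons ⊥ (fun i => g (i, p.2)) : Fin (n + 1) → β) p.1 := by
  rintro ⟨i, l⟩ ⟨i', l'⟩ ⟨hi, hl⟩
  dsimp only at hi hl ⊢
  induction i using Fin.cases with
  | zero => simp
  | succ i =>
    induction i' using Fin.cases with
    | zero => exact absurd hi (Fin.succ_pos i).not_ge
    | succ i' => simpa using hg (Prod.mk_le_mk.mpr ⟨Fin.succ_le_succ_iff.mp hi, hl⟩)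

def consColumnEquiv (γ : Type*) [Preorder γ] (n : ℕ) :
    {f : Fin (n + 1) × γ →o β // ∀ l, f (0, l) = ⊥} ≃ (Fin n × γ →o β) where
  toFun f := ⟨fun p => f.1 (p.1.succ, p.2),
    f.1.monotone.comp (Fin.strictMono_succ.monotone.prodMap monotone_id)⟩
  invFun g := ⟨⟨_, monotone_cons_column g.monotone⟩, fun _ => by simp⟩
  left_inv f := by
    ext ⟨i, l⟩
    induction i using Fin.cases with
    | zero => simp [f.2 l]
    | succ i => simp
  right_inv g := by
    ext
    simp

end Extension

theorem Nat.card_subtype_eq_card_and_add_card_and_not {α : Type*} [Finite α] (P Q : α → Prop) :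
    Nat.card {x // P x} = Nat.card {x // P x ∧ Q x} + Nat.card {x // P x ∧ ¬Q x} := by
  rw [← Nat.card_congr (Equiv.subtypeSubtypeEquivSubtypeInter P Q),
    ← Nat.card_congr (Equiv.subtypeSubtypeEquivSubtypeInter P (¬Q ·)), ← Nat.card_sum]
  exact Nat.card_congr (Equiv.sumCompl _).symm

theorem Finset.sum_range_sum_Icc_eq_sum_range_nsmul {M : Type*} [AddCommMonoid M] (N : ℕ)
    (A : ℕ → M) :
    ∑ j ∈ range N, ∑ i ∈ Icc (j + 1) N, A i = ∑ i ∈ range (N + 1), i • A i := by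
  rw [sum_comm' (t' := range (N + 1)) (s' := range) fun j i => by
    simp only [mem_range, mem_Icc]; omega]
  simp

theorem aHom_zero (n m : ℕ) : aHom n (m + 1) 0 = Nat.card (Fin n × Fin (m + 1) →o Fin 3) := by
  calc aHom n (m + 1) 0
      = Nat.card {f : Fin n × Fin (m + 2) →o Fin 3 //
          ∀ a, f (a, Fin.last _) = (⊤ : Fin n →o Fin 3) a} :=
        Nat.card_congr <| Equiv.subtypeEquivRight fun f => forall_congr' fun i => by
          change (_ ↔ _) ↔ _ = (2 : Fin 3)
          simp only [Nat.not_lt_zero, iff_false]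
          omega
    _ = Nat.card {g : Fin n × Fin (m + 1) →o Fin 3 //
          ∀ p, g p ≤ (⊤ : Fin n →o Fin 3) p.1} :=
        Nat.card_congr (snocRowEquiv _ ⊤)
    _ = _ := Nat.card_congr (Equiv.subtypeUnivEquiv fun _ _ => le_top)

theorem card_topRow_and_corner_eq_zero (n m j : ℕ) :
    Nat.card {f : Fin (n + 1) × Fin (m + 1) →o Fin 3 //
      (∀ i, f (i, Fin.last m) ≤ 1 ↔ (i : ℕ) < j + 1) ∧ f (0, Fin.last m) = 0}
      = aHom n m j := by
  have hcolumn (f : Fin (n + 1) × Fin (m + 1) →o Fin 3) :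
      f (0, Fin.last m) = 0 ↔ ∀ l, f (0, l) = ⊥ :=
    ⟨fun h l => Fin.le_zero_iff.mp
      (h ▸ f.monotone (Prod.mk_le_mk.mpr ⟨le_rfl, Fin.le_last l⟩)), fun h => h _⟩
  calc _ = Nat.card {f : Fin (n + 1) × Fin (m + 1) →o Fin 3 //
          (∀ l, f (0, l) = ⊥) ∧
            ∀ i : Fin n, f (i.succ, Fin.last m) ≤ 1 ↔ (i : ℕ) < j} :=
        Nat.card_congr <| Equiv.subtypeEquivRight fun f => by
          rw [Fin.forall_fin_succ, ← hcolumn]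
          constructor
          · rintro ⟨⟨-, h⟩, h0⟩
            exact ⟨h0, by simpa using h⟩
          · rintro ⟨h0, h⟩
            exact ⟨⟨by simp [h0], by simpa using h⟩, h0⟩
    _ = Nat.card {f : {f : Fin (n + 1) × Fin (m + 1) →o Fin 3 // ∀ l, f (0, l) = ⊥} //
          ∀ i : Fin n, f.1 (i.succ, Fin.last m) ≤ 1 ↔ (i : ℕ) < j} :=
        Nat.card_congr (Equiv.subtypeSubtypeEquivSubtypeInter _ _).symm
    _ = aHom n m j := Nat.card_congr ((consColumnEquiv _ n).subtypeEquiv fun _ => Iff.rfl)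

noncomputable def oneTwoRow (n j : ℕ) : Fin n →o Fin 3 :=
  ⟨fun i => if (i : ℕ) ≤ j then 1 else 2, fun a b hab => by
    dsimp only
    split_ifs <;> grind⟩

theorem oneTwoRow_apply (n j : ℕ) (i : Fin n) :
    oneTwoRow n j i = if (i : ℕ) ≤ j then 1 else 2 :=
  rfl

theorem card_topRow_and_corner_ne_zero (n m j : ℕ) (hj : j ≤ n) :
    Nat.card {f : Fin (n + 1) × Fin (m + 2) →o Fin 3 //
      (∀ i, f (i, Fin.last _) ≤ 1 ↔ (i : ℕ) < j + 1) ∧ f (0, Fin.last _) ≠ 0}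
      = Nat.card {g : Fin (n + 1) × Fin (m + 1) →o Fin 3 //
          g (⟨j, by omega⟩, Fin.last m) ≤ 1} := by
  calc _ = Nat.card {f : Fin (n + 1) × Fin (m + 2) →o Fin 3 //
          ∀ i, f (i, Fin.last _) = oneTwoRow (n + 1) j i} :=
        Nat.card_congr <| Equiv.subtypeEquivRight fun f => by
          simp only [oneTwoRow_apply]
          constructor
          · rintro ⟨h, h0⟩ i
            have := f.monotone (Prod.mk_le_mk.mpr ⟨Fin.zero_le i, le_refl (Fin.last (m + 1))⟩)
            have := h i
            split_ifs <;> omega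
          · intro h
            refine ⟨fun i => ?_, ?_⟩ <;> simp only [h] <;> split_ifs <;> simp_all
    _ = Nat.card {g : Fin (n + 1) × Fin (m + 1) →o Fin 3 //
          ∀ p, g p ≤ oneTwoRow (n + 1) j p.1} :=
        Nat.card_congr (snocRowEquiv _ _)
    _ = _ := Nat.card_congr <| Equiv.subtypeEquivRight fun g => by
          simp only [oneTwoRow_apply]
          refine ⟨fun h => by simpa using h (⟨j, by omega⟩, Fin.last m),
            fun h ⟨i, l⟩ => ?_⟩
          dsimp only
          split_ifs with hij
          · exact (g.monotone (Prod.mk_le_mk.mpr ⟨hij, Fin.le_last l⟩)).trans h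
          · exact Fin.le_last _

theorem aHom_succ (n m j : ℕ) (hj : j ≤ n) :
    aHom (n + 1) (m + 1) (j + 1)
      = aHom n (m + 1) j + ∑ i ∈ Icc (j + 1) (n + 1), aHom (n + 1) m i := by
  rw [aHom, Nat.card_subtype_eq_card_and_add_card_and_not _ fun f => f (0, Fin.last _) = 0,
    card_topRow_and_corner_eq_zero, card_topRow_and_corner_ne_zero n m j hj,
    sum_Icc_aHom_eq_card ⟨j, by omega⟩]

theorem card_orderHom_succ_succ (n m : ℕ) :
    Nat.card (Fin (n + 1) × Fin (m + 2) →o Fin 3)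
      = Nat.card (Fin n × Fin (m + 2) →o Fin 3)
        + ∑ i ∈ range (n + 2), (i + 1) * aHom (n + 1) m i := by
  rw [card_orderHom_eq_sum_aHom, sum_range_succ', aHom_zero, card_orderHom_eq_sum_aHom,
    card_orderHom_eq_sum_aHom,
    sum_congr rfl fun j hj => aHom_succ n m j (Nat.lt_succ_iff.mp (mem_range.mp hj)),
    sum_add_distrib, sum_range_sum_Icc_eq_sum_range_nsmul]
  simp only [smul_eq_mul, add_mul, one_mul, sum_add_distrib]
  ring

/-- For all `n ≥ 1` and `k ≥ 2`: `a_0(C_n×C_k) = h(C_n×C_{k−1})`;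
`a_j(C_n×C_k) = a_{j−1}(C_{n−1}×C_k) + ∑_{i=j}^n a_i(C_n×C_{k−1})` for `1 ≤ j ≤ n`;
and `h(C_n×C_k) = h(C_{n−1}×C_k) + ∑_{i=0}^n (i+1)·a_i(C_n×C_{k−1})`,
where `h(P)` denotes the number of monotone maps from `P` to the chain `C₃`. -/
theorem stmt11 :
    ∀ n k : ℕ, 1 ≤ n → 2 ≤ k →
      aCC n k 0 = Nat.card ((Fin n × Fin (k - 1)) →o Fin 3)
      ∧ (∀ j : ℕ, 1 ≤ j → j ≤ n →
          aCC n k j = aCC (n - 1) k (j - 1) + ∑ i ∈ Finset.Icc j n, aCC n (k - 1) i)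
      ∧ Nat.card ((Fin n × Fin k) →o Fin 3)
          = Nat.card ((Fin (n - 1) × Fin k) →o Fin 3)
            + ∑ i ∈ Finset.range (n + 1), (i + 1) * aCC n (k - 1) i := by
  intro n k hn hk
  obtain ⟨n, rfl⟩ : ∃ n', n = n' + 1 := ⟨n - 1, by omega⟩
  obtain ⟨m, rfl⟩ : ∃ m, k = m + 2 := ⟨k - 2, by omega⟩
  simp only [Nat.add_sub_cancel, show m + 2 - 1 = m + 1 from rfl, aCC_succ_eq_aHom]
  refine ⟨aHom_zero _ _, fun j hj1 hjn => ?_, card_orderHom_succ_succ n m⟩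
  obtain ⟨j, rfl⟩ : ∃ j', j = j' + 1 := ⟨j - 1, by omega⟩
  simpa using aHom_succ n m j (by omega)
end
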